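/- Under the sample selection model and Assumption CV, the unobservable ε is independent of Z conditional on the control function V, in the selected population: ε ⊥⊥ Z | V, C > 0. That is, conditional on the event {C > 0} and on V, the conditional distribution of ε given Z does not depend on Z. -/

import Mathlib

/-!
Given `Z = z`, `η` is uniform on `(0, 1)` and `C = max (h z η) 0` with `h z` strictly increasing,
so on `{C > 0}` the conditional CDF of `C` evaluated at `C` is `η` itself, and
`{C > 0} = {η > a z}` for the threshold `a z = F_C(0 | z)`. Hence in the selected population
`V = η`, and selection is an event in `(η, Z)`. Since `(ε, η) ⊥⊥ Z`, the conditional law of `ε`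
given `(η, Z)` depends on `η` alone, and conditioning on an event in `(η, Z)` preserves this. So in
the selected population the conditional law of `ε` given `(V, Z)` depends on `V` alone, that is,
`ε ⊥⊥ Z | V`.

As `h` is not assumed measurable, the fibrewise monotonicity of `(η, C)` must first be carried
over to a Borel set (by Lusin separation) before it can be read off the disintegration of the law
of `(Z, η, C)` along `Z`.
-/

open MeasureTheory ProbabilityTheory Set
open scoped ENNReal

section FiberwiseRelation

variable {Ω α β : Type*} [MeasurableSpace Ω] [StandardBorelSpace Ω]
  [TopologicalSpace α] [PolishSpace α] [MeasurableSpace α] [BorelSpace α]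
  [TopologicalSpace β] [PolishSpace β] [MeasurableSpace β] [BorelSpace β]

/-- The graph of `(Z, W)` over `G` is only analytic; two Lusin separations enlarge it to a Borel
set whose fibres still satisfy `R`. -/
theorem exists_measurableSet_graph_fiberwise_rel {Z : Ω → α} {W : Ω → β}
    (hZ : Measurable Z) (hW : Measurable W) {G : Set Ω} (hG : MeasurableSet G)
    {R : β → β → Prop} (hR : MeasurableSet {p : β × β | R p.1 p.2})
    (hrel : ∀ ω ∈ G, ∀ ω' ∈ G, Z ω = Z ω' → R (W ω) (W ω')) :
    ∃ D : Set (α × β), MeasurableSet D ∧ (∀ ω ∈ G, (Z ω, W ω) ∈ D) ∧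
      ∀ x ∈ D, ∀ y ∈ D, x.1 = y.1 → R x.2 y.2 := by
  set E := (fun ω => (Z ω, W ω)) '' G
  have hE : AnalyticSet E := hG.analyticSet_image (hZ.prodMk hW)
  set T := (fun x : Ω × β => (Z x.1, x.2)) '' {x | x.1 ∈ G ∧ ¬ R (W x.1) x.2}
  have hT : AnalyticSet T :=
    (hG.preimage measurable_fst |>.inter ((hR.compl).preimage
      ((hW.comp measurable_fst).prodMk measurable_snd))).analyticSet_image
      ((hZ.comp measurable_fst).prodMk measurable_snd)
  obtain ⟨D₀, hED₀, hTD₀, hD₀⟩ := hE.measurablySeparable hT <| by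
    rw [Set.disjoint_left]
    rintro _ ⟨ω, hω, rfl⟩ ⟨⟨ω', q⟩, ⟨hω', hR'⟩, hx⟩
    simp only [Prod.mk.injEq] at hx
    exact hR' (hx.2 ▸ hrel ω' hω' ω hω hx.1)
  set T₁ := (fun x : (α × β) × β => (x.1.1, x.2)) '' {x | x.1 ∈ D₀ ∧ ¬ R x.2 x.1.2}
  have hT₁ : AnalyticSet T₁ :=
    (hD₀.preimage measurable_fst |>.inter ((hR.compl).preimage
      (measurable_snd.prodMk measurable_fst.snd))).analyticSet_image
      (measurable_fst.fst.prodMk measurable_snd)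
  obtain ⟨D₁, hED₁, hT₁D₁, hD₁⟩ := hE.measurablySeparable hT₁ <| by
    rw [Set.disjoint_left]
    rintro _ ⟨ω, hω, rfl⟩ ⟨⟨y, q⟩, ⟨hy, hR'⟩, hx⟩
    simp only [Prod.mk.injEq] at hx
    obtain ⟨hy1, rfl⟩ := hx
    refine Set.disjoint_left.mp hTD₀ ⟨(ω, y.2), ⟨hω, hR'⟩, ?_⟩ hy
    simp [← hy1]
  refine ⟨D₁ ∩ D₀, hD₁.inter hD₀, fun ω hω => ⟨hED₁ ⟨ω, hω, rfl⟩, hED₀ ⟨ω, hω, rfl⟩⟩, ?_⟩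
  rintro x ⟨hx, -⟩ y ⟨-, hy⟩ hxy
  by_contra hR'
  exact Set.disjoint_left.mp hT₁D₁ ⟨(y, x.2), ⟨hy, hR'⟩, by simp [← hxy]⟩ hx

end FiberwiseRelation

def CensoredMonotone (p q : ℝ × ℝ) : Prop := p.1 < q.1 → p.2 ≤ q.2 ∧ (0 < q.2 → p.2 < q.2)

theorem measurableSet_censoredMonotone :
    MeasurableSet {x : (ℝ × ℝ) × (ℝ × ℝ) | CensoredMonotone x.1 x.2} := by
  unfold CensoredMonotone
  measurability

theorem censoredMonotone_max_of_strictMono {k : ℝ → ℝ} (hk : StrictMono k) (s t : ℝ) :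
    CensoredMonotone (s, max (k s) 0) (t, max (k t) 0) := by
  intro hst
  refine ⟨max_le_max (hk hst).le le_rfl, fun ht => ?_⟩
  have hkt : 0 < k t := by simpa using ht
  rw [max_eq_left hkt.le]
  exact max_lt (hk hst) hkt

section Fiber

variable {m : Measure (ℝ × ℝ)} {s : Set (ℝ × ℝ)}

theorem measure_fst_lt_le_measure_snd_le (hs : ∀ᵐ q ∂m, q ∈ s)
    (hrel : ∀ p ∈ s, ∀ q ∈ s, CensoredMonotone p q) {p : ℝ × ℝ} (hp : p ∈ s) :
    m {q | q.1 < p.1} ≤ m {q | q.2 ≤ p.2} := by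
  refine measure_mono_ae ?_
  filter_upwards [hs] with q hq hlt
  exact (hrel q hq p hp hlt).1

theorem measure_snd_le_le_measure_fst_le (hs : ∀ᵐ q ∂m, q ∈ s)
    (hrel : ∀ p ∈ s, ∀ q ∈ s, CensoredMonotone p q) {p : ℝ × ℝ} (hp : p ∈ s) (hp2 : 0 < p.2) :
    m {q | q.2 ≤ p.2} ≤ m {q | q.1 ≤ p.1} := by
  refine measure_mono_ae ?_
  filter_upwards [hs] with q hq hle
  by_contra hlt
  have hpq := hrel p hp q hq (not_le.mp hlt)
  rcases lt_or_ge 0 q.2 with hq2 | hq2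
  · exact absurd (hpq.2 hq2) (not_lt.mpr hle)
  · exact absurd (hpq.1.trans hq2) (not_le.mpr hp2)

theorem ae_cdf_snd_eq_fst_of_censoredMonotone [IsProbabilityMeasure m] (hs : ∀ᵐ q ∂m, q ∈ s)
    (hrel : ∀ p ∈ s, ∀ q ∈ s, CensoredMonotone p q)
    (hfst : m.map Prod.fst = volume.restrict (Ioo 0 1)) :
    ∀ᵐ p ∂m, (0 < p.2 → (m {q | q.2 ≤ p.2}).toReal = p.1) ∧
      (0 < p.2 ↔ (m {q | q.2 ≤ 0}).toReal < p.1) := by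
  have hlaw {A : Set ℝ} (hA : MeasurableSet A) : m (Prod.fst ⁻¹' A) = volume (A ∩ Ioo 0 1) := by
    rw [← Measure.map_apply measurable_fst hA, hfst, Measure.restrict_apply hA]
  have hunit : ∀ᵐ p ∂m, p.1 ∈ Ioo (0 : ℝ) 1 := by
    rw [ae_iff]
    exact (hlaw measurableSet_Ioo.compl).trans (by simp)
  have hatom (t : ℝ) : m {q | q.1 = t} = 0 :=
    (hlaw (measurableSet_singleton t)).trans
      (measure_mono_null inter_subset_left Real.volume_singleton)
  set a := (m {q : ℝ × ℝ | q.2 ≤ 0}).toReal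
  have hne : ∀ᵐ p ∂m, p.1 ≠ a := measure_eq_zero_iff_ae_notMem.mp (hatom a)
  filter_upwards [hs, hunit, hne] with p hp ⟨hp0, hp1⟩ hpa
  have hlt : m {q | q.1 < p.1} = ENNReal.ofReal p.1 := by
    change m (Prod.fst ⁻¹' Iio p.1) = _
    rw [hlaw measurableSet_Iio, Iio_inter_Ioo, min_eq_left hp1.le, Real.volume_Ioo, sub_zero]
  have hle : m {q | q.1 ≤ p.1} = ENNReal.ofReal p.1 := by
    change m (Prod.fst ⁻¹' Iic p.1) = _
    rw [hlaw measurableSet_Iic,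
      ← measure_congr ((Iio_ae_eq_Iic (μ := volume)).inter (ae_eq_refl (Ioo (0 : ℝ) 1))),
      ← hlaw measurableSet_Iio]
    exact hlt
  have hF (hp2 : 0 < p.2) : m {q | q.2 ≤ p.2} = ENNReal.ofReal p.1 :=
    le_antisymm ((measure_snd_le_le_measure_fst_le hs hrel hp hp2).trans hle.le)
      (hlt ▸ measure_fst_lt_le_measure_snd_le hs hrel hp)
  refine ⟨fun hp2 => by rw [hF hp2, ENNReal.toReal_ofReal hp0.le], fun hp2 => ?_, fun hap => ?_⟩
  · have hF0 : m {q | q.2 ≤ 0} ≤ ENNReal.ofReal p.1 :=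
      hF hp2 ▸ measure_mono fun q (hq : q.2 ≤ 0) => hq.trans hp2.le
    exact (ENNReal.toReal_le_of_le_ofReal hp0.le hF0).lt_of_ne hpa.symm
  · by_contra hp2
    have hF0 : ENNReal.ofReal p.1 ≤ m {q | q.2 ≤ 0} :=
      hlt ▸ (measure_fst_lt_le_measure_snd_le hs hrel hp).trans
        (measure_mono fun q (hq : q.2 ≤ p.2) => hq.trans (not_lt.mp hp2))
    exact hap.not_ge ((ENNReal.ofReal_le_iff_le_toReal (measure_ne_top _ _)).mp hF0)

end Fiber

section CondCDF

variable {α : Type*} [MeasurableSpace α]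

noncomputable def condCDFKernel (ρ : Measure (α × ℝ)) : Kernel α ℝ :=
  ⟨fun a => (condCDF ρ a).measure, measurable_measure_condCDF ρ⟩

instance (ρ : Measure (α × ℝ)) : IsMarkovKernel (condCDFKernel ρ) :=
  ⟨fun a => instIsProbabilityMeasureCondCDF ρ a⟩

theorem condCDFKernel_Iic (ρ : Measure (α × ℝ)) (a : α) (x : ℝ) :
    condCDFKernel ρ a (Iic x) = ENNReal.ofReal (condCDF ρ a x) :=
  measure_condCDF_Iic ρ a x

theorem fst_compProd_condCDFKernel (ρ : Measure (α × ℝ)) [IsFiniteMeasure ρ] :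
    ρ.fst ⊗ₘ condCDFKernel ρ = ρ := by
  ext s hs
  rw [Measure.compProd_apply hs]
  exact lintegral_toKernel_mem (isCondKernelCDF_condCDF ρ) () hs

end CondCDF

section Disintegration

variable {Ω α β : Type*} [MeasurableSpace Ω] [MeasurableSpace α] [MeasurableSpace β]
  [StandardBorelSpace β] [Nonempty β] {μ : Measure Ω} {X : Ω → α} {Y : Ω → β}

theorem ae_mem_iff_ae_ae_condDistrib [IsFiniteMeasure μ] (hX : Measurable X) (hY : Measurable Y) {P : Set (α × β)}
    (hP : MeasurableSet P) :
    (∀ᵐ ω ∂μ, (X ω, Y ω) ∈ P) ↔ ∀ᵐ x ∂μ.map X, ∀ᵐ y ∂condDistrib Y X μ x, (x, y) ∈ P := by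
  rw [← Measure.ae_compProd_iff (p := (· ∈ P)) hP, compProd_map_condDistrib hY.aemeasurable,
    ae_map_iff (hX.prodMk hY).aemeasurable (p := (· ∈ P)) hP]

theorem condDistrib_ae_eq_const_of_indepFun [IsProbabilityMeasure μ] (hX : Measurable X)
    (hY : Measurable Y) (h : IndepFun Y X μ) :
    condDistrib Y X μ =ᵐ[μ.map X] Kernel.const α (μ.map Y) := by
  refine condDistrib_ae_eq_of_measure_eq_compProd X hY.aemeasurable ?_
  rw [Measure.compProd_const]
  exact (indepFun_iff_map_prod_eq_prod_map_map hX.aemeasurable hY.aemeasurable).mp h.symm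

theorem ae_condCDF_map_prod_eq [IsFiniteMeasure μ] (hX : Measurable X) {Y : Ω → ℝ} (hY : Measurable Y) :
    ∀ᵐ ω ∂μ, condCDF (μ.map fun ω => (X ω, Y ω)) (X ω) (Y ω) =
      (condDistrib Y X μ (X ω) (Iic (Y ω))).toReal := by
  have hK : condDistrib Y X μ =ᵐ[μ.map X] condCDFKernel (μ.map fun ω => (X ω, Y ω)) := by
    refine condDistrib_ae_eq_of_measure_eq_compProd X hY.aemeasurable ?_
    conv_rhs => rw [← Measure.fst_map_prodMk hY]
    exact (fst_compProd_condCDFKernel _).symm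
  filter_upwards [ae_of_ae_map hX.aemeasurable hK] with ω hω
  rw [hω, condCDFKernel_Iic, ENNReal.toReal_ofReal (condCDF_nonneg _ _ _)]

end Disintegration

theorem measurable_kernel_snd_le {α β : Type*} [MeasurableSpace α] [MeasurableSpace β]
    (κ : Kernel α (β × ℝ)) [IsSFiniteKernel κ] :
    Measurable fun x : α × ℝ => κ x.1 {q | q.2 ≤ x.2} :=
  Kernel.measurable_kernel_prodMk_left (κ := κ.comap Prod.fst measurable_fst)
    (t := {p : (α × ℝ) × (β × ℝ) | p.2.2 ≤ p.1.2})
    (measurableSet_le measurable_snd.snd measurable_fst.snd)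

section CondIndep

variable {Ω β γ δ : Type*} [MeasurableSpace Ω] [MeasurableSpace β] [MeasurableSpace γ]
  [MeasurableSpace δ] {μ : Measure Ω} {X : Ω → β} {Y : Ω → γ} {Z : Ω → δ}

theorem ProbabilityTheory.IndepFun.setLIntegral_preimage_inter_eq_mul (hYZ : IndepFun Y Z μ)
    (hY : Measurable Y) (hZ : Measurable Z) {f : γ → ℝ≥0∞} (hf : Measurable f) {u : Set γ}
    {t : Set δ} (hu : MeasurableSet u) (ht : MeasurableSet t) :
    ∫⁻ ω in Y ⁻¹' u ∩ Z ⁻¹' t, f (Y ω) ∂μ = (∫⁻ ω in Y ⁻¹' u, f (Y ω) ∂μ) * μ (Z ⁻¹' t) := by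
  have hprod : (Y ⁻¹' u ∩ Z ⁻¹' t).indicator (f ∘ Y) =
      (u.indicator f ∘ Y) * (t.indicator 1 ∘ Z) := by
    ext ω; by_cases hu : Y ω ∈ u <;> by_cases ht : Z ω ∈ t <;> simp [hu, ht]
  rw [← lintegral_indicator ((hY hu).inter (hZ ht)), ← lintegral_indicator (hY hu),
    ← lintegral_indicator_one (hZ ht)]
  exact (congrArg (lintegral μ) hprod).trans
    (lintegral_mul_eq_lintegral_mul_lintegral_of_indepFun ((hf.indicator hu).comp hY)
      ((measurable_one.indicator ht).comp hZ)
      (hYZ.comp (hf.indicator hu) (measurable_one.indicator ht)))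

theorem map_prod_eq_compProd_prodMkRight_of_indepFun [StandardBorelSpace β] [Nonempty β]
    [IsProbabilityMeasure μ] (hX : Measurable X) (hY : Measurable Y) (hZ : Measurable Z)
    (h : IndepFun (fun ω => (X ω, Y ω)) Z μ) :
    μ.map (fun ω => ((Y ω, Z ω), X ω)) =
      μ.map (fun ω => (Y ω, Z ω)) ⊗ₘ (condDistrib X Y μ).prodMkRight δ := by
  refine Measure.ext_prod₃' fun {u t s} hu ht hs => ?_
  rw [Measure.map_apply ((hY.prodMk hZ).prodMk hX) ((hu.prod ht).prod hs),
    Measure.compProd_apply_prod (hu.prod ht) hs,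
    setLIntegral_map (hu.prod ht) (Kernel.measurable_coe _ hs) (hY.prodMk hZ)]
  simp only [Kernel.prodMkRight_apply, mk_preimage_prod]
  have hYZ : IndepFun Y Z μ := h.comp measurable_snd measurable_id
  calc μ ((Y ⁻¹' u ∩ Z ⁻¹' t) ∩ X ⁻¹' s)
      = μ ((fun ω => (X ω, Y ω)) ⁻¹' (s ×ˢ u) ∩ Z ⁻¹' t) := by
        congr 1; ext ω; simp only [mem_inter_iff, mem_preimage, mem_prod]; tauto
    _ = μ (Y ⁻¹' u ∩ X ⁻¹' s) * μ (Z ⁻¹' t) := by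
        rw [h.measure_inter_preimage_eq_mul _ _ (hs.prod hu) ht, mk_preimage_prod, inter_comm]
    _ = (∫⁻ ω in Y ⁻¹' u, condDistrib X Y μ (Y ω) s ∂μ) * μ (Z ⁻¹' t) := by
        rw [setLIntegral_preimage_condDistrib hY hX.aemeasurable hs hu]
    _ = ∫⁻ ω in Y ⁻¹' u ∩ Z ⁻¹' t, condDistrib X Y μ (Y ω) s ∂μ := by
        rw [← hYZ.setLIntegral_preimage_inter_eq_mul hY hZ (Kernel.measurable_coe _ hs) hu ht]

theorem map_prod_eq_compProd_iff [IsFiniteMeasure μ] {W : Ω → γ} (hW : Measurable W)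
    (hX : Measurable X) (κ : Kernel γ β) [IsSFiniteKernel κ] :
    μ.map (fun ω => (W ω, X ω)) = μ.map W ⊗ₘ κ ↔
      ∀ {A : Set γ} {s : Set β}, MeasurableSet A → MeasurableSet s →
        μ (W ⁻¹' A ∩ X ⁻¹' s) = ∫⁻ ω in W ⁻¹' A, κ (W ω) s ∂μ := by
  have hrect {A : Set γ} {s : Set β} (hA : MeasurableSet A) (hs : MeasurableSet s) :
      μ.map (fun ω => (W ω, X ω)) (A ×ˢ s) = μ (W ⁻¹' A ∩ X ⁻¹' s) ∧
        (μ.map W ⊗ₘ κ) (A ×ˢ s) = ∫⁻ ω in W ⁻¹' A, κ (W ω) s ∂μ := by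
    rw [Measure.map_apply (hW.prodMk hX) (hA.prod hs), Measure.compProd_apply_prod hA hs,
      setLIntegral_map hA (Kernel.measurable_coe _ hs) hW]
    exact ⟨rfl, rfl⟩
  refine ⟨fun h A s hA hs => ?_, fun h => Measure.ext_prod fun hA hs => ?_⟩
  · rw [← (hrect hA hs).1, ← (hrect hA hs).2, h]
  · rw [(hrect hA hs).1, (hrect hA hs).2, h hA hs]

theorem map_prod_cond_preimage_eq_compProd [IsFiniteMeasure μ] {W : Ω → γ} (hW : Measurable W)
    (hX : Measurable X) {κ : Kernel γ β} [IsSFiniteKernel κ]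
    (h : μ.map (fun ω => (W ω, X ω)) = μ.map W ⊗ₘ κ) {B : Set γ} (hB : MeasurableSet B) :
    (μ[|W ⁻¹' B]).map (fun ω => (W ω, X ω)) = (μ[|W ⁻¹' B]).map W ⊗ₘ κ := by
  rw [map_prod_eq_compProd_iff hW hX] at h ⊢
  intro A s hA hs
  rw [cond_apply (hW hB), ProbabilityTheory.cond, Measure.restrict_smul, lintegral_smul_measure,
    Measure.restrict_restrict (hW hA), ← inter_assoc, ← preimage_inter, h (hB.inter hA) hs,
    preimage_inter, inter_comm]
  rfl

theorem condIndepFun_of_map_prod_eq_compProd_prodMkRight [StandardBorelSpace Ω]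
    [StandardBorelSpace β] [Nonempty β] [StandardBorelSpace δ] [Nonempty δ] [IsFiniteMeasure μ]
    {W : Ω → γ} (hX : Measurable X) (hZ : Measurable Z) (hW : Measurable W) {κ : Kernel γ β}
    [IsMarkovKernel κ]
    (h : μ.map (fun ω => ((W ω, Z ω), X ω)) = μ.map (fun ω => (W ω, Z ω)) ⊗ₘ κ.prodMkRight δ) :
    Z ⟂ᵢ[W, hW; μ] X := by
  have hWZ : Measurable fun ω => (W ω, Z ω) := hW.prodMk hZ
  have hmarg : μ.map (fun ω => (W ω, X ω)) = μ.map W ⊗ₘ κ := by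
    rw [map_prod_eq_compProd_iff hWZ hX] at h
    rw [map_prod_eq_compProd_iff hW hX]
    intro A s hA hs
    simpa [mk_preimage_prod] using h (hA.prod MeasurableSet.univ) hs
  have hW_ae : ∀ᵐ p ∂μ.map (fun ω => (W ω, Z ω)), condDistrib X W μ p.1 = κ p.1 := by
    refine ae_of_ae_map (p := fun w => condDistrib X W μ w = κ w) measurable_fst.aemeasurable ?_
    rw [Measure.map_map measurable_fst hWZ]
    exact condDistrib_ae_eq_of_measure_eq_compProd W hX.aemeasurable hmarg
  rw [condIndepFun_iff_condDistrib_prod_ae_eq_prodMkRight hX hZ hW]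
  filter_upwards [condDistrib_ae_eq_of_measure_eq_compProd _ hX.aemeasurable h, hW_ae]
    with p hp hpW
  rw [hp, Kernel.prodMkRight_apply, Kernel.prodMkRight_apply, hpW]

end CondIndep

section SelectionModel

variable {dz : ℕ} {Ω : Type*} [MeasurableSpace Ω] {μ : Measure Ω} {Z : Ω → Fin dz → ℝ}
  {η C : Ω → ℝ} {h : (Fin dz → ℝ) → ℝ → ℝ}

theorem exists_measurableSet_censoredMonotone_graph [StandardBorelSpace Ω] (hZ : Measurable Z)
    (hη : Measurable η) (hC : Measurable C) (hmono : ∀ᵐ ω ∂μ, StrictMono (h (Z ω)))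
    (hCdef : ∀ ω, C ω = max (h (Z ω) (η ω)) 0) :
    ∃ D : Set ((Fin dz → ℝ) × (ℝ × ℝ)), MeasurableSet D ∧ (∀ᵐ ω ∂μ, (Z ω, (η ω, C ω)) ∈ D) ∧
      ∀ x ∈ D, ∀ y ∈ D, x.1 = y.1 → CensoredMonotone x.2 y.2 := by
  set N := toMeasurable μ {ω | ¬ StrictMono (h (Z ω))}
  have hN : μ N = 0 := by rw [measure_toMeasurable]; exact ae_iff.mp hmono
  have hgood : ∀ ω ∈ Nᶜ, StrictMono (h (Z ω)) := fun ω hω =>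
    not_not.mp fun hbad => hω (subset_toMeasurable μ _ hbad)
  obtain ⟨D, hD, hgraph, hrel⟩ := exists_measurableSet_graph_fiberwise_rel hZ
    (hη.prodMk hC) (measurableSet_toMeasurable μ _).compl measurableSet_censoredMonotone
    fun ω hω ω' _ hZω => by
      simpa only [hCdef, hZω] using censoredMonotone_max_of_strictMono (hZω ▸ hgood ω hω) _ _
  refine ⟨D, hD, ?_, hrel⟩
  filter_upwards [measure_eq_zero_iff_ae_notMem.mp hN] with ω hω using hgraph ω hω

theorem ae_map_fst_condDistrib_eq [IsProbabilityMeasure μ] (hZ : Measurable Z)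
    (hη : Measurable η) (hC : Measurable C) (hindep : IndepFun η Z μ)
    (hunif : μ.map η = volume.restrict (Ioo (0 : ℝ) 1)) :
    ∀ᵐ z ∂μ.map Z, (condDistrib (fun ω => (η ω, C ω)) Z μ z).map Prod.fst =
      volume.restrict (Ioo (0 : ℝ) 1) := by
  filter_upwards [condDistrib_comp Z (hη.prodMk hC).aemeasurable measurable_fst,
    condDistrib_ae_eq_const_of_indepFun hZ hη hindep]
    with z hcomp hconst
  rw [← Kernel.map_apply _ measurable_fst, ← hcomp, ← hunif]
  exact hconst

theorem ae_eq_condDistrib_snd_le [IsProbabilityMeasure μ] (hZ : Measurable Z) (hη : Measurable η)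
    (hC : Measurable C) {V : Ω → ℝ}
    (hVdef : ∀ ω, V ω = condCDF (μ.map fun ω' => (Z ω', C ω')) (Z ω) (C ω)) :
    ∀ᵐ ω ∂μ, V ω = (condDistrib (fun ω => (η ω, C ω)) Z μ (Z ω) {q | q.2 ≤ C ω}).toReal := by
  filter_upwards [ae_condCDF_map_prod_eq hZ hC, ae_of_ae_map hZ.aemeasurable
    (condDistrib_comp Z (hη.prodMk hC).aemeasurable measurable_snd)] with ω hcdf hcomp
  have hsnd : condDistrib C Z μ (Z ω) =
      (condDistrib (fun ω => (η ω, C ω)) Z μ (Z ω)).map Prod.snd := by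
    rw [← Kernel.map_apply _ measurable_snd]
    exact hcomp
  rw [hVdef, hcdf, hsnd, Measure.map_apply measurable_snd measurableSet_Iic]
  rfl

theorem exists_selection_threshold [StandardBorelSpace Ω] [IsProbabilityMeasure μ] {V : Ω → ℝ}
    (hZ : Measurable Z) (hη : Measurable η) (hC : Measurable C) (hindep : IndepFun η Z μ)
    (hunif : μ.map η = volume.restrict (Ioo (0 : ℝ) 1))
    (hmono : ∀ᵐ ω ∂μ, StrictMono (h (Z ω))) (hCdef : ∀ ω, C ω = max (h (Z ω) (η ω)) 0)
    (hVdef : ∀ ω, V ω = condCDF (μ.map fun ω' => (Z ω', C ω')) (Z ω) (C ω)) :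
    ∃ a : (Fin dz → ℝ) → ℝ, Measurable a ∧
      ∀ᵐ ω ∂μ, (0 < C ω ↔ a (Z ω) < η ω) ∧ (0 < C ω → V ω = η ω) := by
  set κ := condDistrib (fun ω => (η ω, C ω)) Z μ
  obtain ⟨D, hD, hgraph, hrel⟩ := exists_measurableSet_censoredMonotone_graph hZ hη hC hmono hCdef
  set a := fun z => (κ z {q | q.2 ≤ 0}).toReal
  have ha : Measurable a :=
    (Kernel.measurable_coe κ (measurableSet_le measurable_snd measurable_const)).ennreal_toReal
  set P : Set ((Fin dz → ℝ) × (ℝ × ℝ)) :=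
    {x | (0 < x.2.2 → (κ x.1 {q | q.2 ≤ x.2.2}).toReal = x.2.1) ∧ (0 < x.2.2 ↔ a x.1 < x.2.1)}
  have hP : MeasurableSet P := by
    have hF : Measurable fun x : (Fin dz → ℝ) × (ℝ × ℝ) => (κ x.1 {q | q.2 ≤ x.2.2}).toReal :=
      ((measurable_kernel_snd_le κ).comp (measurable_fst.prodMk measurable_snd.snd)).ennreal_toReal
    have hA : Measurable fun x : (Fin dz → ℝ) × (ℝ × ℝ) => a x.1 := ha.comp measurable_fst
    measurability
  have hfiber : ∀ᵐ ω ∂μ, (Z ω, (η ω, C ω)) ∈ P := by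
    rw [ae_mem_iff_ae_ae_condDistrib hZ (hη.prodMk hC) hP]
    filter_upwards [(ae_mem_iff_ae_ae_condDistrib hZ (hη.prodMk hC) hD).mp hgraph,
      ae_map_fst_condDistrib_eq hZ hη hC hindep hunif] with z hzD hzfst
    exact ae_cdf_snd_eq_fst_of_censoredMonotone hzD (fun p hp q hq => hrel _ hp _ hq rfl) hzfst
  refine ⟨a, ha, ?_⟩
  filter_upwards [hfiber, ae_eq_condDistrib_snd_le hZ hη hC hVdef] with ω ⟨hV, hsel⟩ hVω
  exact ⟨hsel, fun hpos => hVω.trans (hV hpos)⟩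

end SelectionModel

theorem control_function_existence_general
    {dz de : ℕ} {Ω : Type} [MeasurableSpace Ω] [StandardBorelSpace Ω]
    (μ : Measure Ω) [IsProbabilityMeasure μ]
    (Z : Ω → Fin dz → ℝ) (ε : Ω → Fin de → ℝ) (η : Ω → ℝ) (C : Ω → ℝ) (V : Ω → ℝ)
    (h : (Fin dz → ℝ) → ℝ → ℝ)
    (hZ : Measurable Z) (hε : Measurable ε) (hη : Measurable η) (hC : Measurable C)
    (hV : Measurable V)
    -- Assumption CV: (ε, η) ⊥⊥ Z
    (hindep : IndepFun (fun ω => (ε ω, η ω)) Z μ)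
    -- η is continuously distributed, normalized to be uniform on (0,1)
    (hunif : μ.map η = volume.restrict (Set.Ioo (0 : ℝ) 1))
    -- t ↦ h(z, t) is strictly increasing a.s.
    (hmono : ∀ᵐ ω ∂μ, StrictMono (h (Z ω)))
    -- censored selection rule: C = max(h(Z, η), 0)
    (hCdef : ∀ ω, C ω = max (h (Z ω) (η ω)) 0)
    -- control function: V = F_C(C | Z), the conditional CDF of C given Z evaluated at (C, Z)
    (hVdef : ∀ ω, V ω = condCDF (μ.map fun ω' => (Z ω', C ω')) (Z ω) (C ω)) :
    -- ε ⊥⊥ Z | V, conditionally on the selected population {C > 0}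
    CondIndepFun (MeasurableSpace.comap V inferInstance) hV.comap_le ε Z
      (μ[|{ω | 0 < C ω}]) := by
  obtain ⟨a, ha, hthr⟩ := exists_selection_threshold hZ hη hC
    (hindep.comp measurable_snd measurable_id) hunif hmono hCdef hVdef
  set B : Set (ℝ × (Fin dz → ℝ)) := {p | a p.2 < p.1}
  have hB : MeasurableSet B := measurableSet_lt (ha.comp measurable_snd) measurable_fst
  have hS : μ[|{ω | 0 < C ω}] = μ[|(fun ω => (η ω, Z ω)) ⁻¹' B] := by
    have hSB : {ω | 0 < C ω} =ᵐ[μ] (fun ω => (η ω, Z ω)) ⁻¹' B := by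
      filter_upwards [hthr] with ω hω using propext hω.1
    rw [ProbabilityTheory.cond, ProbabilityTheory.cond, measure_congr hSB,
      Measure.restrict_congr_set hSB]
  have hVη : ∀ᵐ ω ∂μ[|{ω | 0 < C ω}], V ω = η ω := by
    filter_upwards [cond_absolutelyContinuous.ae_le hthr,
      ae_cond_mem (measurableSet_lt measurable_const hC)] with ω hω hpos using hω.2 hpos
  refine (condIndepFun_of_map_prod_eq_compProd_prodMkRight hε hZ hV
    (κ := condDistrib ε η μ) ?_).symm
  have hVZ : (fun ω => (V ω, Z ω)) =ᵐ[μ[|{ω | 0 < C ω}]] fun ω => (η ω, Z ω) :=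
    hVη.mono fun ω hω => by simp only [hω]
  rw [Measure.map_congr hVZ, Measure.map_congr (hVZ.prodMk (ae_eq_refl ε)), hS]
  exact map_prod_cond_preimage_eq_compProd (hη.prodMk hZ) hε
    (map_prod_eq_compProd_prodMkRight_of_indepFun hε hη hZ hindep) hB

theorem control_function_existence
    {dz de : ℕ} {Ω : Type} [MeasurableSpace Ω] [StandardBorelSpace Ω] [Nonempty Ω]
    (μ : Measure Ω) [IsProbabilityMeasure μ]
    (Z : Ω → Fin dz → ℝ) (ε : Ω → Fin de → ℝ) (η : Ω → ℝ) (C : Ω → ℝ) (V : Ω → ℝ)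
    (h : (Fin dz → ℝ) → ℝ → ℝ)
    (hZ : Measurable Z) (hε : Measurable ε) (hη : Measurable η) (hC : Measurable C)
    (hV : Measurable V)
    -- Assumption CV: (ε, η) ⊥⊥ Z
    (hindep : IndepFun (fun ω => (ε ω, η ω)) Z μ)
    -- η is continuously distributed, normalized to be uniform on (0,1)
    (hunif : μ.map η = volume.restrict (Set.Ioo (0 : ℝ) 1))
    -- t ↦ h(z, t) is strictly increasing a.s.
    (hmono : ∀ᵐ ω ∂μ, StrictMono (h (Z ω)))
    -- censored selection rule: C = max(h(Z, η), 0)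
    (hCdef : ∀ ω, C ω = max (h (Z ω) (η ω)) 0)
    -- control function: V = F_C(C | Z), the conditional CDF of C given Z evaluated at (C, Z)
    (hVdef : ∀ ω, V ω = condCDF (μ.map fun ω' => (Z ω', C ω')) (Z ω) (C ω))
    -- the selected population has positive probability
    (hsel : μ {ω | 0 < C ω} ≠ 0) :
    -- ε ⊥⊥ Z | V, conditionally on the selected population {C > 0}
    CondIndepFun (MeasurableSpace.comap V inferInstance) hV.comap_le ε Z
      (μ[|{ω | 0 < C ω}]) :=
  control_function_existence_general μ Z ε η C V h hZ hε hη hC hV hindep hunif hmono hCdef hVdef
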